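/- arXiv:2103.02414 — 2 statements merged into one kernel-verified Lean document; each statement's English description precedes it below -/
import Mathlib

section
/- Let N be a finite set with |N| ≥ 2 and let S be a min-semi-balanced system on N with r = 0, where ∑_{S∈S} λ_S·χ_S = r·χ_N is the unique affine semi-conic combination with all coefficients nonzero. Then there exist M ⊂ N with |M| ≥ 2 and a min-balanced system B on M such that S = B ∪ {M}. -/
open Finset

variable {α : Type*} [Fintype α] [DecidableEq α]

/-- Incidence (0/1 indicator) vector of a subset `S` of the player set. -/
def chi (S : Finset α) : α → ℝ := fun i => if i ∈ S then 1 else 0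

/-- A non-trivial set system on `N`: nonempty, not containing `∅` nor `N`. -/
def IsNontrivial (𝒮 : Finset (Finset α)) : Prop :=
  𝒮.Nonempty ∧ ∅ ∉ 𝒮 ∧ (Finset.univ : Finset α) ∉ 𝒮

/-- A combination is semi-conic if at most one coefficient is strictly negative. -/
def SemiConic (𝒮 : Finset (Finset α)) (lam : Finset α → ℝ) : Prop :=
  (𝒮.filter fun S => lam S < 0).card ≤ 1

/-- The combination `∑_{S ∈ 𝒮} lam S • χ_S` yields the constant vector `[r,…,r]`. -/
def CombYields (𝒮 : Finset (Finset α)) (lam : Finset α → ℝ) (r : ℝ) : Prop :=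
  ∀ i : α, ∑ S ∈ 𝒮, lam S * chi S i = r

/-- A semi-balanced set system on `N`. -/
def IsSemiBalanced (𝒮 : Finset (Finset α)) : Prop :=
  IsNontrivial 𝒮 ∧ ∃ (lam : Finset α → ℝ) (r : ℝ),
    CombYields 𝒮 lam r ∧ SemiConic 𝒮 lam ∧ ∀ S ∈ 𝒮, lam S ≠ 0

/-- A minimal semi-balanced set system on `N`. -/
def IsMinSemiBalanced (𝒮 : Finset (Finset α)) : Prop :=
  IsSemiBalanced 𝒮 ∧ ∀ 𝒞 ⊂ 𝒮, ¬ IsSemiBalanced 𝒞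

/-- A balanced set system on `N`. -/
def IsBalanced (ℬ : Finset (Finset α)) : Prop :=
  IsNontrivial ℬ ∧ ∃ lam : Finset α → ℝ,
    (∀ S ∈ ℬ, 0 < lam S) ∧ ∀ i : α, ∑ S ∈ ℬ, lam S * chi S i = 1

/-- A minimal balanced set system on `N`. -/
def IsMinBalanced (ℬ : Finset (Finset α)) : Prop :=
  IsBalanced ℬ ∧ ∀ 𝒞 ⊂ ℬ, ¬ IsBalanced 𝒞

/-- A set `T ∈ 𝒮` is exceptional within `𝒮`. -/
def IsExceptional (𝒮 : Finset (Finset α)) (T : Finset α) : Prop :=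
  T ∈ 𝒮 ∧ ∃ (lam : Finset α → ℝ) (r : ℝ),
    CombYields 𝒮 lam r ∧ lam T < 0 ∧ ∀ S ∈ 𝒮, S ≠ T → 0 ≤ lam S

/-- `ℬ` is a balanced set system on the subset `M`. -/
def IsBalancedOn (M : Finset α) (ℬ : Finset (Finset α)) : Prop :=
  ℬ.Nonempty ∧ (∀ S ∈ ℬ, S ≠ ∅ ∧ S ⊂ M) ∧
  ∃ lam : Finset α → ℝ, (∀ S ∈ ℬ, 0 < lam S) ∧
    ∀ i : α, ∑ S ∈ ℬ, lam S * chi S i = chi M i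

/-- `ℬ` is a minimal balanced set system on the subset `M`. -/
def IsMinBalancedOn (M : Finset α) (ℬ : Finset (Finset α)) : Prop :=
  IsBalancedOn M ℬ ∧ ∀ 𝒞 ⊂ ℬ, ¬ IsBalancedOn M 𝒞

lemma chi_nonneg (S : Finset α) (i : α) : 0 ≤ chi S i := by
  unfold chi; split <;> norm_num

lemma chi_mem (S : Finset α) {i : α} (h : i ∈ S) : chi S i = 1 := by
  simp [chi, h]

lemma chi_not_mem (S : Finset α) {i : α} (h : i ∉ S) : chi S i = 0 := by
  simp [chi, h]

theorem stmt11 (h2 : 2 ≤ Fintype.card α) (𝒮 : Finset (Finset α))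
    (hmin : IsMinSemiBalanced 𝒮) (lam : Finset α → ℝ)
    (haff : ∑ S ∈ 𝒮, lam S = 1) (hcomb : CombYields 𝒮 lam 0)
    (hsc : SemiConic 𝒮 lam) (hnz : ∀ S ∈ 𝒮, lam S ≠ 0) :
    ∃ (M : Finset α) (ℬ : Finset (Finset α)), M ⊂ (Finset.univ : Finset α) ∧
      2 ≤ M.card ∧ IsMinBalancedOn M ℬ ∧ M ∉ ℬ ∧ 𝒮 = insert M ℬ := by
  obtain ⟨⟨⟨hne, hemp, huniv⟩, _⟩, hminimal⟩ := hmin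
  -- there is a negative coefficient
  have hnegex : ∃ T ∈ 𝒮, lam T < 0 := by
    by_contra h
    push_neg at h
    obtain ⟨S0, hS0⟩ := hne
    have hS0ne : S0 ≠ ∅ := fun h' => hemp (h' ▸ hS0)
    obtain ⟨i, hi⟩ := Finset.nonempty_iff_ne_empty.mpr hS0ne
    have hpos : 0 < lam S0 * chi S0 i := by
      have h1 := lt_of_le_of_ne (h S0 hS0) (Ne.symm (hnz S0 hS0))
      rw [chi_mem S0 hi]; linarith
    have hle : lam S0 * chi S0 i ≤ ∑ S ∈ 𝒮, lam S * chi S i := by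
      refine Finset.single_le_sum (f := fun S => lam S * chi S i) (fun S hS => ?_) hS0
      have h1 := lt_of_le_of_ne (h S hS) (Ne.symm (hnz S hS))
      exact mul_nonneg h1.le (chi_nonneg S i)
    have := hcomb i
    linarith
  obtain ⟨T, hT, hTneg⟩ := hnegex
  -- all other coefficients are positive
  have hothers : ∀ S ∈ 𝒮, S ≠ T → 0 < lam S := by
    intro S hS hST
    by_contra h
    push_neg at h
    have hSneg : lam S < 0 := lt_of_le_of_ne h (hnz S hS)
    have hsub : {S, T} ⊆ 𝒮.filter fun S => lam S < 0 := by
      intro x hx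
      simp only [Finset.mem_insert, Finset.mem_singleton] at hx
      rcases hx with rfl | rfl <;> simp [Finset.mem_filter, hS, hT, hSneg, hTneg]
    have hcard : ({S, T} : Finset (Finset α)).card = 2 := Finset.card_pair hST
    have := Finset.card_le_card hsub
    rw [hcard] at this
    exact absurd (this.trans hsc) (by norm_num)
  have hTne : T ≠ ∅ := fun h' => hemp (h' ▸ hT)
  have hTuniv : T ≠ univ := fun h' => huniv (h' ▸ hT)
  have hc : (0 : ℝ) < -lam T := by linarith
  set ℬ := 𝒮.erase T with hℬdef
  have hℬ𝒮 : ℬ ⊆ 𝒮 := Finset.erase_subset _ _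
  -- key identity
  have key : ∀ i, ∑ S ∈ ℬ, lam S * chi S i = (-lam T) * chi T i := by
    intro i
    have h1 : ∑ S ∈ ℬ, lam S * chi S i + lam T * chi T i = 0 := by
      rw [hℬdef, Finset.sum_erase_add 𝒮 _ hT]; exact hcomb i
    linarith
  set ν : Finset α → ℝ := fun S => lam S / (-lam T) with hνdef
  have hνpos : ∀ S ∈ ℬ, 0 < ν S := by
    intro S hS
    exact div_pos (hothers S (hℬ𝒮 hS) (Finset.ne_of_mem_erase hS)) hc
  have keyν : ∀ i, ∑ S ∈ ℬ, ν S * chi S i = chi T i := by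
    intro i
    have : ∑ S ∈ ℬ, ν S * chi S i = (∑ S ∈ ℬ, lam S * chi S i) / (-lam T) := by
      rw [Finset.sum_div]
      exact Finset.sum_congr rfl fun S _ => by rw [hνdef]; ring
    rw [this, key i, mul_comm, mul_div_assoc, div_self (ne_of_gt hc), mul_one]
  -- ℬ is nonempty
  obtain ⟨i0, hi0⟩ := Finset.nonempty_iff_ne_empty.mpr hTne
  have hℬne : ℬ.Nonempty := by
    rw [Finset.nonempty_iff_ne_empty]
    intro h
    have := keyν i0
    rw [h, Finset.sum_empty, chi_mem T hi0] at this
    norm_num at this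
  -- members of ℬ are nonempty proper subsets of T
  have hℬmem : ∀ S ∈ ℬ, S ≠ ∅ ∧ S ⊂ T := by
    intro S hS
    refine ⟨fun h' => hemp (h' ▸ hℬ𝒮 hS), ?_⟩
    refine Finset.ssubset_iff_subset_ne.mpr ⟨?_, Finset.ne_of_mem_erase hS⟩
    intro i hiS
    by_contra hiT
    have hsum := keyν i
    rw [chi_not_mem T hiT] at hsum
    have hterm : 0 < ν S * chi S i := by
      rw [chi_mem S hiS]; simpa using hνpos S hS
    have hle : ν S * chi S i ≤ ∑ S' ∈ ℬ, ν S' * chi S' i :=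
      Finset.single_le_sum (fun S' hS' => mul_nonneg (hνpos S' hS').le (chi_nonneg S' i)) hS
    linarith
  -- |T| ≥ 2
  have hTcard : 2 ≤ T.card := by
    by_contra h
    push_neg at h
    interval_cases hcard : T.card
    · exact hTne (Finset.card_eq_zero.mp hcard)
    · obtain ⟨j, hj⟩ := Finset.card_eq_one.mp hcard
      obtain ⟨B, hB⟩ := hℬne
      obtain ⟨hBne, hBT⟩ := hℬmem B hB
      rw [hj] at hBT
      rcases Finset.subset_singleton_iff.mp hBT.subset with h' | h'
      · exact hBne h'
      · exact hBT.ne h'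
  refine ⟨T, ℬ, Finset.ssubset_univ_iff.mpr hTuniv, hTcard, ⟨⟨hℬne, hℬmem, ν, hνpos, keyν⟩, ?_⟩,
    Finset.notMem_erase T 𝒮, (Finset.insert_erase hT).symm⟩
  -- minimality
  intro 𝒞 h𝒞 hbal
  obtain ⟨h𝒞ne, h𝒞mem, μ, hμpos, hμsum⟩ := hbal
  have h𝒞ℬ : 𝒞 ⊆ ℬ := h𝒞.subset
  have hT𝒞 : T ∉ 𝒞 := fun h => Finset.notMem_erase T 𝒮 (h𝒞ℬ h)
  set 𝒮' := insert T 𝒞 with h𝒮'def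
  set lam' : Finset α → ℝ := fun S => if S = T then -1 else μ S with hlam'def
  have h𝒮'sub : 𝒮' ⊂ 𝒮 := by
    obtain ⟨B, hBℬ, hB𝒞⟩ := Finset.exists_of_ssubset h𝒞
    refine ⟨Finset.insert_subset hT (h𝒞ℬ.trans hℬ𝒮), fun hcon => ?_⟩
    have hB𝒮' : B ∈ 𝒮' := hcon (hℬ𝒮 hBℬ)
    rcases Finset.mem_insert.mp hB𝒮' with rfl | h'
    · exact Finset.notMem_erase B 𝒮 hBℬ
    · exact hB𝒞 h'
  refine hminimal 𝒮' h𝒮'sub ⟨⟨⟨T, Finset.mem_insert_self T 𝒞⟩, ?_, ?_⟩, lam', 0, ?_, ?_, ?_⟩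
  · intro h
    rcases Finset.mem_insert.mp h with h' | h'
    · exact hTne h'.symm
    · exact hemp (hℬ𝒮 (h𝒞ℬ h'))
  · intro h
    rcases Finset.mem_insert.mp h with h' | h'
    · exact hTuniv h'.symm
    · exact huniv (hℬ𝒮 (h𝒞ℬ h'))
  · intro i
    rw [Finset.sum_insert hT𝒞]
    have : ∀ S ∈ 𝒞, lam' S * chi S i = μ S * chi S i := by
      intro S hS
      rw [hlam'def]
      simp only [if_neg (fun h : S = T => hT𝒞 (h ▸ hS))]
    rw [Finset.sum_congr rfl this, hμsum i, hlam'def]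
    simp only [if_pos rfl, chi]
    by_cases hiT : i ∈ T <;> simp [hiT]
  · unfold SemiConic
    have hsub : (𝒮'.filter fun S => lam' S < 0) ⊆ {T} := by
      intro S hS
      rw [Finset.mem_filter] at hS
      rw [Finset.mem_singleton]
      by_contra h'
      rcases Finset.mem_insert.mp hS.1 with h'' | h''
      · exact h' h''
      · have := hμpos S h''
        rw [hlam'def] at hS
        simp only [if_neg h'] at hS
        linarith [hS.2]
    calc (𝒮'.filter fun S => lam' S < 0).card ≤ ({T} : Finset (Finset α)).card :=
          Finset.card_le_card hsub
      _ = 1 := Finset.card_singleton T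
  · intro S hS
    rcases Finset.mem_insert.mp hS with rfl | h'
    · rw [hlam'def]; simp
    · rw [hlam'def]
      simp only [if_neg (fun h : S = T => hT𝒞 (h ▸ h'))]
      exact (hμpos S h').ne'
end

section
/- Let N be a finite set with |N| ≥ 3, let B be a min-balanced set system on N with |B| ≥ 3 and let Z ∈ B. Then Y := N\Z is not in B, and the system S := (B\{Z}) ∪ {Y} is purely min-semi-balanced on N with Y the exceptional set within S. -/
open Finset

variable {α : Type*} [Fintype α] [DecidableEq α]

/-!
The incidence vectors of a min-balanced system `ℬ` are linearly independent (a dependence would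
let one shift the balancing weights `λ` until one of them vanishes), so every combination of `ℬ`
yielding a constant vector is a multiple of `λ`. As `χ_{Zᶜ} = 1 - χ_Z`, the combinations of
`S = (ℬ \ {Z}) ∪ {Zᶜ}` yielding constants correspond to those of `ℬ`, hence are all multiples of
the vector that agrees with `λ` on `ℬ \ {Z}` and equals `-λ_Z` at `Zᶜ`. This vector has no zero
entry and exactly one negative entry, which gives semi-balancedness, minimality, failure of
balancedness and the exceptionality of `Zᶜ` at once.
-/

lemma chi_compl (Z : Finset α) (i : α) : chi Zᶜ i = 1 - chi Z i := by
  by_cases h : i ∈ Z <;> simp [chi, h]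

section Nontrivial

variable {β : Type*} [Fintype β]

lemma IsNontrivial.nonempty_type {𝒮 : Finset (Finset β)} (h : IsNontrivial 𝒮) : Nonempty β := by
  obtain ⟨⟨S, hS⟩, hempty, -⟩ := h
  obtain ⟨i, -⟩ := nonempty_iff_ne_empty.mpr (ne_of_mem_of_not_mem hS hempty)
  exact ⟨i⟩

lemma IsNontrivial.mono {𝒞 𝒮 : Finset (Finset β)} (h : IsNontrivial 𝒮) (h𝒞 : 𝒞 ⊆ 𝒮)
    (hne : 𝒞.Nonempty) : IsNontrivial 𝒞 :=
  ⟨hne, fun hempty => h.2.1 (h𝒞 hempty), fun huniv => h.2.2 (h𝒞 huniv)⟩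

end Nontrivial

lemma IsNontrivial.insert_compl_erase {ℬ : Finset (Finset α)} (h : IsNontrivial ℬ) {Z : Finset α}
    (hZ : Z ∈ ℬ) : IsNontrivial (insert Zᶜ (ℬ.erase Z)) := by
  obtain ⟨-, hempty, huniv⟩ := h
  refine ⟨insert_nonempty _ _, ?_, ?_⟩ <;> rw [mem_insert, not_or]
  · exact ⟨fun h => huniv ((compl_eq_empty_iff Z).mp h.symm ▸ hZ),
      fun h => hempty (mem_of_mem_erase h)⟩
  · exact ⟨fun h => hempty ((compl_eq_univ_iff Z).mp h.symm ▸ hZ),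
      fun h => huniv (mem_of_mem_erase h)⟩

lemma isBalanced_pair_compl {Z : Finset α} (hempty : Z ≠ ∅) (huniv : Z ≠ univ) :
    IsBalanced {Z, Zᶜ} := by
  have hne : Z ≠ Zᶜ := fun h => hempty (by simpa using congrArg (Z ∩ ·) h)
  refine ⟨⟨insert_nonempty _ _, ?_, ?_⟩, fun _ => 1, fun _ _ => one_pos, fun i => ?_⟩
  · simp [hempty.symm, (compl_eq_empty_iff Z).not.mpr huniv, eq_comm]
  · simp [huniv.symm, (compl_eq_univ_iff Z).not.mpr hempty, eq_comm]
  · rw [sum_pair hne, chi_compl]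
    ring

section CombYields

variable {β : Type*} [DecidableEq β] {𝒮 : Finset (Finset β)} {μ ν : Finset β → ℝ} {r s : ℝ}

lemma CombYields.congr (h : CombYields 𝒮 μ r) (hμν : ∀ S ∈ 𝒮, μ S = ν S) :
    CombYields 𝒮 ν r := fun i => by
  rw [← h i]
  exact sum_congr rfl fun S hS => by rw [hμν S hS]

lemma CombYields.sub_smul (hμ : CombYields 𝒮 μ r) (hν : CombYields 𝒮 ν s) (t : ℝ) :
    CombYields 𝒮 (μ - t • ν) (r - t * s) := fun i => by
  simp only [Pi.sub_apply, Pi.smul_apply, smul_eq_mul, sub_mul, sum_sub_distrib, mul_assoc,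
    ← mul_sum, hμ i, hν i]

lemma CombYields.indicator {𝒞 : Finset (Finset β)} (h : CombYields 𝒞 ν r) (h𝒞 : 𝒞 ⊆ 𝒮) :
    CombYields 𝒮 ((𝒞 : Set (Finset β)).indicator ν) r := fun i => by
  rw [sum_indicator_subset_of_eq_zero ν (fun S x => x * chi S i) h𝒞 fun _ => zero_mul _]
  exact h i

end CombYields

lemma isBalanced_filter_pos {ℬ : Finset (Finset α)} (hnt : IsNontrivial ℬ) {lam : Finset α → ℝ}
    (hlam : CombYields ℬ lam 1) (hnn : ∀ S ∈ ℬ, 0 ≤ lam S) :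
    IsBalanced (ℬ.filter (0 < lam ·)) := by
  have hsum : CombYields (ℬ.filter (0 < lam ·)) lam 1 := fun i => by
    rw [sum_filter_of_ne fun S hS hne => (hnn S hS).lt_of_ne' (left_ne_zero_of_mul hne)]
    exact hlam i
  have hne : (ℬ.filter (0 < lam ·)).Nonempty := by
    obtain ⟨i⟩ := hnt.nonempty_type
    by_contra hemp
    simpa [not_nonempty_iff_eq_empty.mp hemp] using hsum i
  exact ⟨hnt.mono (filter_subset _ _) hne, lam, fun S hS => (mem_filter.mp hS).2, hsum⟩

/-- Subtracting the largest multiple of `μ` that keeps the weights of `ℬ` nonnegative kills a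
weight, leaving a balanced proper subsystem. -/
lemma IsMinBalanced.nonpos_of_combYields_zero {ℬ : Finset (Finset α)} (hmin : IsMinBalanced ℬ)
    {μ : Finset α → ℝ} (hμ : CombYields ℬ μ 0) : ∀ S ∈ ℬ, μ S ≤ 0 := by
  obtain ⟨⟨hnt, lam, hlam_pos, hlam⟩, hminl⟩ := hmin
  by_contra! ⟨T, hT, hμT⟩
  obtain ⟨S₀, hS₀, hS₀_min⟩ :=
    (ℬ.filter (0 < μ ·)).exists_min_image (fun S => lam S / μ S) ⟨T, mem_filter.mpr ⟨hT, hμT⟩⟩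
  obtain ⟨hS₀ℬ, hμS₀⟩ := mem_filter.mp hS₀
  set t := lam S₀ / μ S₀
  have ht : 0 < t := div_pos (hlam_pos S₀ hS₀ℬ) hμS₀
  have hnn : ∀ S ∈ ℬ, 0 ≤ (lam - t • μ) S := fun S hS => by
    simp only [Pi.sub_apply, Pi.smul_apply, smul_eq_mul, sub_nonneg]
    rcases lt_or_ge 0 (μ S) with hμS | hμS
    · exact (le_div_iff₀ hμS).mp (hS₀_min S (mem_filter.mpr ⟨hS, hμS⟩))
    · exact (mul_nonpos_of_nonneg_of_nonpos ht.le hμS).trans (hlam_pos S hS).le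
  have hS₀_zero : (lam - t • μ) S₀ = 0 := by
    simp only [Pi.sub_apply, Pi.smul_apply, smul_eq_mul, t, div_mul_cancel₀ _ hμS₀.ne', sub_self]
  have hyield : CombYields ℬ (lam - t • μ) 1 := by simpa using CombYields.sub_smul hlam hμ t
  refine hminl _ ⟨filter_subset _ _, fun hsub => ?_⟩ (isBalanced_filter_pos hnt hyield hnn)
  exact (mem_filter.mp (hsub hS₀ℬ)).2.ne' hS₀_zero

lemma IsMinBalanced.eq_zero_of_combYields_zero {ℬ : Finset (Finset α)} (hmin : IsMinBalanced ℬ)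
    {μ : Finset α → ℝ} (hμ : CombYields ℬ μ 0) : ∀ S ∈ ℬ, μ S = 0 := by
  have hneg : CombYields ℬ (-μ) 0 := fun i => by simp [neg_mul, hμ i]
  intro S hS
  exact le_antisymm (hmin.nonpos_of_combYields_zero hμ S hS)
    (neg_nonpos.mp (hmin.nonpos_of_combYields_zero hneg S hS))

lemma IsMinBalanced.compl_notMem {ℬ : Finset (Finset α)} (hmin : IsMinBalanced ℬ)
    (hcard : 3 ≤ ℬ.card) {Z : Finset α} (hZ : Z ∈ ℬ) : Zᶜ ∉ ℬ := by
  obtain ⟨⟨⟨-, hempty, huniv⟩, -⟩, hminl⟩ := hmin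
  intro hZc
  have hsub : {Z, Zᶜ} ⊆ ℬ := insert_subset hZ (singleton_subset_iff.mpr hZc)
  have hss : {Z, Zᶜ} ⊂ ℬ := hsub.ssubset_of_ne fun h => by
    have := card_le_two (a := Z) (b := Zᶜ)
    rw [h] at this
    omega
  exact hminl _ hss (isBalanced_pair_compl (ne_of_mem_of_not_mem hZ hempty)
    (ne_of_mem_of_not_mem hZ huniv))

lemma SemiConic.of_nonneg_of_ne {β : Type*} {𝒮 : Finset (Finset β)} {ν : Finset β → ℝ}
    (T : Finset β) (h : ∀ S ∈ 𝒮, S ≠ T → 0 ≤ ν S) : SemiConic 𝒮 ν := by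
  refine (card_le_card fun S hS => mem_singleton.mpr ?_).trans (card_singleton T).le
  by_contra hne
  obtain ⟨hS, hneg⟩ := mem_filter.mp hS
  exact (h S hS hne).not_gt hneg

section ComplementSwap

variable {ℬ : Finset (Finset α)} {Z : Finset α}

lemma sum_insert_compl_erase (hZ : Z ∈ ℬ) (hZc : Zᶜ ∉ ℬ) (ν : Finset α → ℝ) (i : α) :
    ∑ S ∈ insert Zᶜ (ℬ.erase Z), ν S * chi S i
      = ν Zᶜ + ∑ S ∈ ℬ, Function.update ν Z (-ν Zᶜ) S * chi S i := by
  have hrest : ∑ S ∈ ℬ.erase Z, Function.update ν Z (-ν Zᶜ) S * chi S i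
      = ∑ S ∈ ℬ.erase Z, ν S * chi S i :=
    sum_congr rfl fun S hS => by rw [Function.update_of_ne (ne_of_mem_erase hS)]
  rw [sum_insert fun h => hZc (mem_of_mem_erase h), ← add_sum_erase ℬ _ hZ, hrest,
    Function.update_self, chi_compl]
  ring

lemma combYields_insert_compl_erase_iff (hZ : Z ∈ ℬ) (hZc : Zᶜ ∉ ℬ) {ν : Finset α → ℝ} {r : ℝ} :
    CombYields (insert Zᶜ (ℬ.erase Z)) ν r
      ↔ CombYields ℬ (Function.update ν Z (-ν Zᶜ)) (r - ν Zᶜ) :=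
  forall_congr' fun i => by
    rw [sum_insert_compl_erase hZ hZc, eq_sub_iff_add_eq']

lemma CombYields.insert_compl_erase (hZ : Z ∈ ℬ) (hZc : Zᶜ ∉ ℬ) {lam : Finset α → ℝ}
    (hlam : CombYields ℬ lam 1) :
    CombYields (insert Zᶜ (ℬ.erase Z)) (Function.update lam Zᶜ (-lam Z)) (1 - lam Z) := by
  refine (combYields_insert_compl_erase_iff hZ hZc).mpr ?_
  convert hlam.congr fun S hS => ?_ using 1
  · simp
  · by_cases hSZ : S = Z
    · simp [hSZ]
    · simp [hSZ, ne_of_mem_of_not_mem hS hZc]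

end ComplementSwap

def ConstCombsAreMultiples (𝒮 : Finset (Finset α)) (ν₀ : Finset α → ℝ) : Prop :=
  ∀ ν r, CombYields 𝒮 ν r → ∃ c : ℝ, ∀ S ∈ 𝒮, ν S = c * ν₀ S

namespace ConstCombsAreMultiples

variable {𝒮 : Finset (Finset α)} {ν₀ : Finset α → ℝ}

lemma of_isMinBalanced {ℬ : Finset (Finset α)} (hmin : IsMinBalanced ℬ) {lam : Finset α → ℝ}
    (hlam : CombYields ℬ lam 1) : ConstCombsAreMultiples ℬ lam := fun μ r hμ =>
  ⟨r, fun S hS => by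
    have := hmin.eq_zero_of_combYields_zero (by simpa using hμ.sub_smul hlam r) S hS
    simpa [sub_eq_zero] using this⟩

lemma insert_compl_erase {ℬ : Finset (Finset α)} {lam : Finset α → ℝ}
    (h : ConstCombsAreMultiples ℬ lam) {Z : Finset α} (hZ : Z ∈ ℬ) (hZc : Zᶜ ∉ ℬ) :
    ConstCombsAreMultiples (insert Zᶜ (ℬ.erase Z)) (Function.update lam Zᶜ (-lam Z)) :=
  fun ν r hν => by
    obtain ⟨c, hc⟩ := h _ _ ((combYields_insert_compl_erase_iff hZ hZc).mp hν)
    refine ⟨c, fun S hS => ?_⟩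
    rcases mem_insert.mp hS with rfl | hS
    · have := hc Z hZ
      simp only [Function.update_self] at this ⊢
      linarith
    · have hSZ : S ≠ Z := ne_of_mem_erase hS
      have hSZc : S ≠ Zᶜ := ne_of_mem_of_not_mem (mem_of_mem_erase hS) hZc
      simpa [hSZ, hSZc] using hc S (mem_of_mem_erase hS)

lemma not_isBalanced (h : ConstCombsAreMultiples 𝒮 ν₀) {T S : Finset α} (hT : T ∈ 𝒮)
    (hνT : ν₀ T < 0) (hS : S ∈ 𝒮) (hνS : 0 < ν₀ S) : ¬ IsBalanced 𝒮 := by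
  rintro ⟨-, ν, hν_pos, hν⟩
  obtain ⟨c, hc⟩ := h ν 1 hν
  have hcT := hc T hT ▸ hν_pos T hT
  have hcS := hc S hS ▸ hν_pos S hS
  nlinarith

/-- A proper subsystem misses some set, so its combinations extended by zero are the zero
multiple of `ν₀`. -/
lemma not_isSemiBalanced_of_ssubset (h : ConstCombsAreMultiples 𝒮 ν₀)
    (hν₀ : ∀ S ∈ 𝒮, ν₀ S ≠ 0) {𝒞 : Finset (Finset α)} (h𝒞 : 𝒞 ⊂ 𝒮) : ¬ IsSemiBalanced 𝒞 := by
  rintro ⟨⟨⟨S, hS⟩, -, -⟩, ν, r, hν, -, hν_ne⟩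
  obtain ⟨W, hW𝒮, hW𝒞⟩ := exists_of_ssubset h𝒞
  obtain ⟨c, hc⟩ := h _ r (hν.indicator h𝒞.subset)
  have hc0 : c = 0 := by
    have := hc W hW𝒮
    rw [Set.indicator_of_notMem (by exact_mod_cast hW𝒞)] at this
    exact (mul_eq_zero.mp this.symm).resolve_right (hν₀ W hW𝒮)
  have := hc S (h𝒞.subset hS)
  rw [Set.indicator_of_mem (by exact_mod_cast hS), hc0, zero_mul] at this
  exact hν_ne S hS this

end ConstCombsAreMultiples

theorem stmt13_general (ℬ : Finset (Finset α))
    (hmin : IsMinBalanced ℬ) (hcard : 3 ≤ ℬ.card) (Z : Finset α) (hZ : Z ∈ ℬ) :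
    Zᶜ ∉ ℬ ∧
    IsMinSemiBalanced (insert Zᶜ (ℬ.erase Z)) ∧
    ¬ IsBalanced (insert Zᶜ (ℬ.erase Z)) ∧
    IsExceptional (insert Zᶜ (ℬ.erase Z)) Zᶜ := by
  obtain ⟨hnt, lam, hlam_pos, hlam⟩ := hmin.1
  have hZc : Zᶜ ∉ ℬ := hmin.compl_notMem hcard hZ
  set ν₀ := Function.update lam Zᶜ (-lam Z)
  have hν₀ : CombYields (insert Zᶜ (ℬ.erase Z)) ν₀ (1 - lam Z) :=
    CombYields.insert_compl_erase hZ hZc hlam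
  have hray : ConstCombsAreMultiples (insert Zᶜ (ℬ.erase Z)) ν₀ :=
    (ConstCombsAreMultiples.of_isMinBalanced hmin hlam).insert_compl_erase hZ hZc
  have hneg : ν₀ Zᶜ < 0 := by simpa [ν₀] using hlam_pos Z hZ
  have hpos : ∀ S ∈ insert Zᶜ (ℬ.erase Z), S ≠ Zᶜ → 0 < ν₀ S := fun S hS hne => by
    simpa [ν₀, hne] using hlam_pos S (mem_of_mem_erase ((mem_insert.mp hS).resolve_left hne))
  have hnz : ∀ S ∈ insert Zᶜ (ℬ.erase Z), ν₀ S ≠ 0 := fun S hS => by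
    by_cases hne : S = Zᶜ
    · exact hne ▸ hneg.ne
    · exact (hpos S hS hne).ne'
  refine ⟨hZc, ⟨?_, fun 𝒞 h𝒞 => hray.not_isSemiBalanced_of_ssubset hnz h𝒞⟩, ?_, ?_⟩
  · exact ⟨hnt.insert_compl_erase hZ, ν₀, _, hν₀,
      .of_nonneg_of_ne Zᶜ fun S hS hne => (hpos S hS hne).le, hnz⟩
  · obtain ⟨S₁, hS₁⟩ : (ℬ.erase Z).Nonempty := by
      rw [← card_pos, card_erase_of_mem hZ]
      omega
    have hS₁Zc : S₁ ≠ Zᶜ := ne_of_mem_of_not_mem (mem_of_mem_erase hS₁) hZc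
    exact hray.not_isBalanced (mem_insert_self _ _) hneg (mem_insert_of_mem hS₁)
      (hpos _ (mem_insert_of_mem hS₁) hS₁Zc)
  · exact ⟨mem_insert_self _ _, ν₀, _, hν₀, hneg, fun S hS hne => (hpos S hS hne).le⟩

theorem stmt13 (h3 : 3 ≤ Fintype.card α) (ℬ : Finset (Finset α))
    (hmin : IsMinBalanced ℬ) (hcard : 3 ≤ ℬ.card) (Z : Finset α) (hZ : Z ∈ ℬ) :
    Zᶜ ∉ ℬ ∧
    IsMinSemiBalanced (insert Zᶜ (ℬ.erase Z)) ∧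
    ¬ IsBalanced (insert Zᶜ (ℬ.erase Z)) ∧
    IsExceptional (insert Zᶜ (ℬ.erase Z)) Zᶜ :=
  stmt13_general ℬ hmin hcard Z hZ
end
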